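/- Let T > 0 and let (B_t)_{t∈[0,T]} be a standard real Brownian motion. Then for every real p > 2, almost surely the sample path t ↦ B_t has finite p-variation on [0,T]. -/

import Mathlib

open Finset Set MeasureTheory ProbabilityTheory Filter
open scoped ENNReal NNReal

/-- The set of all subdivision sums `Σ_i |x(t_{i+1}) - x(t_i)|^p` over finite
subdivisions `a = t_0 ≤ t_1 ≤ … ≤ t_n = b` of `[a,b]`. -/
noncomputable def pVarSums (p a b : ℝ) (x : ℝ → ℝ) : Set ℝ :=
  {v | ∃ (n : ℕ) (t : ℕ → ℝ), t 0 = a ∧ t n = b ∧ (∀ i < n, t i ≤ t (i + 1)) ∧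
        v = ∑ i ∈ Finset.range n, |x (t (i + 1)) - x (t i)| ^ p}

/-- A path has finite `p`-variation on `[a,b]` if its subdivision sums are bounded. -/
def HasFinitePVariation (p a b : ℝ) (x : ℝ → ℝ) : Prop :=
  BddAbove (pVarSums p a b x)

lemma aux_add_rpow {p a b : ℝ} (ha : 0 ≤ a) (hb : 0 ≤ b) (hp : 1 ≤ p) :
    a ^ p + b ^ p ≤ (a + b) ^ p := by
  have := NNReal.add_rpow_le_rpow_add a.toNNReal b.toNNReal hp
  have h := NNReal.coe_le_coe.2 this
  push_cast [NNReal.coe_rpow, Real.coe_toNNReal _ ha, Real.coe_toNNReal _ hb,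
    Real.coe_toNNReal _ (add_nonneg ha hb)] at h
  convert h using 2 <;> rw [Real.coe_toNNReal _ (add_nonneg ha hb)]

lemma aux_sum_rpow_le {q : ℝ} (hq : 1 ≤ q) (f : ℕ → ℝ) (n : ℕ) (hf : ∀ i < n, 0 ≤ f i) :
    ∑ i ∈ Finset.range n, f i ^ q ≤ (∑ i ∈ Finset.range n, f i) ^ q := by
  induction n with
  | zero => simp [Real.zero_rpow (by positivity : q ≠ 0)]
  | succ n ih =>
    rw [Finset.sum_range_succ, Finset.sum_range_succ]
    have hf' : ∀ i < n, 0 ≤ f i := fun i hi => hf i (hi.trans (Nat.lt_succ_self n))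
    have hs : 0 ≤ ∑ i ∈ Finset.range n, f i :=
      Finset.sum_nonneg fun i hi => hf' i (Finset.mem_range.mp hi)
    have h1 : ∑ i ∈ Finset.range n, f i ^ q + f n ^ q
        ≤ (∑ i ∈ Finset.range n, f i) ^ q + f n ^ q := by gcongr; exact ih hf'
    exact h1.trans (aux_add_rpow hs (hf n (Nat.lt_succ_self n)) hq)

lemma aux_mono {n : ℕ} {t : ℕ → ℝ} (ht : ∀ i < n, t i ≤ t (i + 1)) :
    ∀ i j, i ≤ j → j ≤ n → t i ≤ t j := by
  intro i j hij hjn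
  induction j with
  | zero => exact le_of_eq (congrArg t (Nat.le_zero.mp hij))
  | succ j ihj =>
    rcases Nat.eq_or_lt_of_le hij with h | h
    · exact le_of_eq (congrArg t h)
    · exact (ihj (Nat.lt_succ_iff.mp h) (le_trans (Nat.le_succ j) hjn)).trans
        (ht j (Nat.lt_of_succ_le hjn))


lemma holder_pVar {p α C T : ℝ} (hT : 0 < T) (hC : 0 ≤ C) (hp : 0 ≤ p) (hαp : 1 ≤ α * p)
    (x : ℝ → ℝ)
    (hol : ∀ s t : ℝ, s ∈ Set.Icc 0 T → t ∈ Set.Icc 0 T → s ≤ t →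
      |x t - x s| ≤ C * (t - s) ^ α) :
    HasFinitePVariation p 0 T x := by
  refine ⟨C ^ p * T ^ (α * p), ?_⟩
  rintro v ⟨n, t, h0, hn, hmono, rfl⟩
  have hmem : ∀ i ≤ n, t i ∈ Set.Icc (0:ℝ) T := by
    intro i hi
    constructor
    · rw [← h0]; exact aux_mono hmono 0 i (Nat.zero_le _) hi
    · rw [← hn]; exact aux_mono hmono i n hi le_rfl
  have key : ∀ i < n, |x (t (i+1)) - x (t i)| ^ p ≤ C ^ p * (t (i+1) - t i) ^ (α * p) := by
    intro i hi
    have h1 := hol (t i) (t (i+1)) (hmem i hi.le) (hmem (i+1) hi) (hmono i hi)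
    have h2 : |x (t (i+1)) - x (t i)| ^ p ≤ (C * (t (i+1) - t i) ^ α) ^ p :=
      Real.rpow_le_rpow (abs_nonneg _) h1 hp
    have hd : (0:ℝ) ≤ t (i+1) - t i := sub_nonneg.2 (hmono i hi)
    rw [Real.mul_rpow hC (Real.rpow_nonneg hd _)] at h2
    rw [Real.rpow_mul hd]
    exact h2
  calc ∑ i ∈ Finset.range n, |x (t (i+1)) - x (t i)| ^ p
      ≤ ∑ i ∈ Finset.range n, C ^ p * (t (i+1) - t i) ^ (α * p) := by
        refine Finset.sum_le_sum ?_; intro i hi; exact key i (Finset.mem_range.mp hi)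
    _ = C ^ p * ∑ i ∈ Finset.range n, (t (i+1) - t i) ^ (α * p) := by
        rw [Finset.mul_sum]
    _ ≤ C ^ p * (∑ i ∈ Finset.range n, (t (i+1) - t i)) ^ (α * p) := by
        refine mul_le_mul_of_nonneg_left ?_ (Real.rpow_nonneg hC _)
        exact aux_sum_rpow_le hαp _ n (fun i h => sub_nonneg.2 (hmono i h))
    _ = C ^ p * T ^ (α * p) := by
        rw [Finset.sum_range_sub, h0, hn, sub_zero]

lemma chain_bound (x : ℝ → ℝ) (T C r : ℝ) (hC : 0 ≤ C) (hr0 : 0 < r) (hr1 : r < 1)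
    (H : ∀ n k : ℕ, k + 1 ≤ 2 ^ n → |x ((k+1) * T / 2 ^ n) - x (k * T / 2 ^ n)| ≤ C * r ^ n) :
    ∀ d m j k : ℕ, d ≤ m → j ≤ k → k ≤ 2 ^ m → k - j ≤ 2 ^ d →
      |x (k * T / 2 ^ m) - x (j * T / 2 ^ m)| ≤
        2 * C * r ^ (m - d) * ∑ i ∈ Finset.range (d + 1), r ^ i := by
  have Hbd : ∀ m a b : ℕ, a ≤ b → b ≤ a + 1 → b ≤ 2 ^ m →
      |x (b * T / 2 ^ m) - x (a * T / 2 ^ m)| ≤ C * r ^ m := by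
    intro m a b hab hba hb2
    rcases Nat.eq_or_lt_of_le hab with h | h
    · subst h; simp [abs_nonneg]; positivity
    · have hb : b = a + 1 := by omega
      subst hb
      have := H m a hb2
      push_cast at this ⊢
      exact this
  intro d
  induction d with
  | zero =>
    intro m j k hdm hjk hk2 hkj
    have h1 : |x (k * T / 2 ^ m) - x (j * T / 2 ^ m)| ≤ C * r ^ m :=
      Hbd m j k hjk (by omega) hk2
    have : C * r ^ m ≤ 2 * C * r ^ (m - 0) * ∑ i ∈ Finset.range 1, r ^ i := by
      simp only [Nat.sub_zero, Finset.sum_range_one, pow_zero, mul_one]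
      nlinarith [pow_pos hr0 m, pow_nonneg hr0.le m]
    exact h1.trans this
  | succ d ih =>
    intro m j k hdm hjk hk2 hkj
    by_cases hcase : k ≤ j + 1
    · have h1 : |x (k * T / 2 ^ m) - x (j * T / 2 ^ m)| ≤ C * r ^ m := Hbd m j k hjk hcase hk2
      refine h1.trans ?_
      have hsum1 : (1:ℝ) ≤ ∑ i ∈ Finset.range (d + 2), r ^ i := by
        have : ∑ i ∈ Finset.range (d + 2), r ^ i = 1 + ∑ i ∈ Finset.Ico 1 (d+2), r ^ i := by
          rw [Finset.range_eq_Ico, ← Finset.sum_Ico_consecutive _ (by omega : 0 ≤ 1) (by omega)]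
          simp
        rw [this]
        have : 0 ≤ ∑ i ∈ Finset.Ico 1 (d+2), r ^ i :=
          Finset.sum_nonneg fun i _ => pow_nonneg hr0.le i
        linarith
      have hrpow : r ^ m ≤ r ^ (m - (d+1)) :=
        pow_le_pow_of_le_one hr0.le hr1.le (by omega)
      calc C * r ^ m ≤ 2 * C * r ^ (m - (d+1)) * 1 := by
            nlinarith [pow_nonneg hr0.le m, pow_nonneg hr0.le (m - (d+1))]
        _ ≤ 2 * C * r ^ (m - (d+1)) * ∑ i ∈ Finset.range (d + 1 + 1), r ^ i := by
            have h2 : 0 ≤ 2 * C * r ^ (m - (d+1)) := by positivity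
            calc 2 * C * r ^ (m - (d+1)) * 1 ≤
                2 * C * r ^ (m - (d+1)) * ∑ i ∈ Finset.range (d + 2), r ^ i :=
                  mul_le_mul_of_nonneg_left hsum1 h2
              _ = _ := by norm_num
    · -- k ≥ j + 2
      set j' := j + j % 2 with hj'def
      set k' := k - k % 2 with hk'def
      have hj2 : j % 2 ≤ 1 := by omega
      have hk2' : k % 2 ≤ 1 := by omega
      have hjj' : j ≤ j' := by omega
      have hj'j : j' ≤ j + 1 := by omega
      have hkk' : k' ≤ k := by omega
      have hkk'2 : k ≤ k' + 1 := by omega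
      have hj'k' : j' ≤ k' := by omega
      have hdvdj : 2 ∣ j' := by omega
      have hdvdk : 2 ∣ k' := by omega
      have hm1 : 1 ≤ m := by omega
      have h2m : 2 ^ m = 2 * 2 ^ (m - 1) := by
        rw [← pow_succ']; congr 1; omega
      have h2d : 2 ^ (d + 1) = 2 * 2 ^ d := by rw [pow_succ']
      -- apply IH at level m-1
      have hIH := ih (m - 1) (j' / 2) (k' / 2) (by omega) (by omega) (by omega) (by omega)
      have hcast : ∀ a : ℕ, 2 ∣ a → ((a / 2 : ℕ) : ℝ) * T / 2 ^ (m - 1) = (a : ℝ) * T / 2 ^ m := by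
        intro a ha
        have h1 : ((a / 2 : ℕ) : ℝ) = (a : ℝ) / 2 := by
          rw [Nat.cast_div ha (by norm_num)]; norm_num
        rw [h1, show (2:ℝ) ^ m = 2 ^ (m-1) * 2 by rw [← pow_succ]; congr 1; omega]
        ring
      rw [hcast k' hdvdk, hcast j' hdvdj] at hIH
      have hb1 : |x (k * T / 2 ^ m) - x (k' * T / 2 ^ m)| ≤ C * r ^ m :=
        Hbd m k' k hkk' hkk'2 hk2
      have hb2 : |x (j' * T / 2 ^ m) - x (j * T / 2 ^ m)| ≤ C * r ^ m :=
        Hbd m j j' hjj' hj'j (by omega)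
      have htri : |x (k * T / 2 ^ m) - x (j * T / 2 ^ m)| ≤
          |x (k * T / 2 ^ m) - x (k' * T / 2 ^ m)| +
          |x (k' * T / 2 ^ m) - x (j' * T / 2 ^ m)| +
          |x (j' * T / 2 ^ m) - x (j * T / 2 ^ m)| := by
        have := abs_sub_le (x (k * T / 2 ^ m)) (x (k' * T / 2 ^ m)) (x (j * T / 2 ^ m))
        have h2 := abs_sub_le (x (k' * T / 2 ^ m)) (x (j' * T / 2 ^ m)) (x (j * T / 2 ^ m))
        linarith
      have hsplit : 2 * C * r ^ (m - (d+1)) * ∑ i ∈ Finset.range (d + 1 + 1), r ^ i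
          = 2 * C * r ^ ((m-1) - d) * (∑ i ∈ Finset.range (d + 1), r ^ i) + 2 * C * r ^ m := by
        rw [Finset.sum_range_succ, show (m-1) - d = m - (d+1) by omega, mul_add]
        congr 1
        have h : r ^ (m - (d+1)) * r ^ (d+1) = r ^ m := by
          rw [← pow_add]; congr 1; omega
        calc 2 * C * r ^ (m - (d+1)) * r ^ (d+1)
            = 2 * C * (r ^ (m - (d+1)) * r ^ (d+1)) := by ring
          _ = 2 * C * r ^ m := by rw [h]
      rw [hsplit]
      linarith

lemma chain_holder (x : ℝ → ℝ) (T C α : ℝ) (hT : 0 < T) (hC : 0 ≤ C) (hα : 0 < α)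
    (H : ∀ n k : ℕ, k + 1 ≤ 2 ^ n →
      |x ((k+1) * T / 2 ^ n) - x (k * T / 2 ^ n)| ≤ C * ((2:ℝ) ^ (-α)) ^ n) :
    ∀ m j k : ℕ, j ≤ k → k ≤ 2 ^ m →
      |x (k * T / 2 ^ m) - x (j * T / 2 ^ m)| ≤
        (2 * C / (1 - (2:ℝ) ^ (-α)) * (2 / T) ^ α) * (((k:ℝ) - j) * T / 2 ^ m) ^ α := by
  set r : ℝ := (2:ℝ) ^ (-α) with hrdef
  have hr0 : 0 < r := Real.rpow_pos_of_pos (by norm_num) _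
  have hr1 : r < 1 := Real.rpow_lt_one_of_one_lt_of_neg (by norm_num) (by linarith)
  have hgeom : ∀ n : ℕ, ∑ i ∈ Finset.range n, r ^ i ≤ (1 - r)⁻¹ := by
    intro n
    rw [geom_sum_eq (by linarith : r ≠ 1), div_le_iff_of_neg (by linarith : r - 1 < 0)]
    have h2 : (1 - r)⁻¹ * (r - 1) = -1 := by
      rw [inv_mul_eq_div, div_eq_iff (by linarith : (1:ℝ) - r ≠ 0)]; ring
    rw [h2]
    nlinarith [pow_nonneg hr0.le n]
  intro m j k hjk hk2
  rcases Nat.eq_or_lt_of_le hjk with h | hlt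
  · subst h
    simp [Real.zero_rpow hα.ne']
  · set g := k - j with hgdef
    have hg1 : 1 ≤ g := by omega
    set d := Nat.clog 2 g with hddef
    have hgd : g ≤ 2 ^ d := Nat.le_pow_clog one_lt_two g
    have h2d : 2 ^ d ≤ 2 * g := by
      rcases Nat.eq_or_lt_of_le hg1 with h1 | h1
      · rw [hddef, ← h1, Nat.clog_one_right]; omega
      · have hdp : 1 ≤ d := Nat.clog_pos one_lt_two (by omega)
        have h3 : 2 ^ (d - 1) < g := by
          have := Nat.pow_pred_clog_lt_self one_lt_two (by omega : 1 < g)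
          simpa [Nat.pred_eq_sub_one, ← hddef] using this
        have h2 : 2 ^ d = 2 * 2 ^ (d - 1) := by
          rw [← pow_succ']; congr 1; omega
        omega
    have hdm : d ≤ m := (Nat.clog_le_iff_le_pow one_lt_two).mpr (by omega)
    have hcb := chain_bound x T C r hC hr0 hr1 H d m j k hdm hjk hk2 (by omega)
    have e1 : ∀ n : ℕ, r ^ n = ((2:ℝ) ^ n) ^ (-α) := by
      intro n
      rw [hrdef, ← Real.rpow_natCast ((2:ℝ) ^ (-α)) n, ← Real.rpow_natCast (2:ℝ) n,
        ← Real.rpow_mul (by norm_num), ← Real.rpow_mul (by norm_num), mul_comm]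
    have e2 : ((2:ℝ) ^ (m - d)) ^ (-α) = ((2:ℝ) ^ d / 2 ^ m) ^ α := by
      rw [Real.rpow_neg (by positivity), ← Real.inv_rpow (by positivity)]
      congr 1
      rw [pow_sub₀ (2:ℝ) (by norm_num) hdm]
      field_simp
    have e3 : r ^ (m - d) ≤ (2 / T) ^ α * (((k:ℝ) - j) * T / 2 ^ m) ^ α := by
      rw [e1, e2]
      have hkj : ((k:ℝ) - j) = (g : ℝ) := by
        rw [hgdef]; push_cast [Nat.cast_sub hjk]; ring
      rw [hkj]
      have h4 : ((2:ℝ) ^ d / 2 ^ m) ^ α ≤ ((2 * g : ℝ) / 2 ^ m) ^ α := by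
        apply Real.rpow_le_rpow (by positivity) _ hα.le
        apply div_le_div_of_nonneg_right ?_ (by positivity)
        · exact_mod_cast h2d
      refine h4.trans (le_of_eq ?_)
      rw [← Real.mul_rpow (by positivity) (by positivity)]
      congr 1
      field_simp
    have hK0 : 0 ≤ 2 * C / (1 - r) := by
      apply div_nonneg (by linarith) (by linarith)
    calc |x (k * T / 2 ^ m) - x (j * T / 2 ^ m)|
        ≤ 2 * C * r ^ (m - d) * ∑ i ∈ Finset.range (d + 1), r ^ i := hcb
      _ ≤ 2 * C * r ^ (m - d) * (1 - r)⁻¹ := by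
          apply mul_le_mul_of_nonneg_left (hgeom _) (by positivity)
      _ = (2 * C / (1 - r)) * r ^ (m - d) := by ring
      _ ≤ (2 * C / (1 - r)) * ((2 / T) ^ α * (((k:ℝ) - j) * T / 2 ^ m) ^ α) :=
          mul_le_mul_of_nonneg_left e3 hK0
      _ = (2 * C / (1 - r) * (2 / T) ^ α) * (((k:ℝ) - j) * T / 2 ^ m) ^ α := by ring

lemma holder_extend (x : ℝ → ℝ) (T K α : ℝ) (hT : 0 < T) (hK : 0 ≤ K) (hα : 0 < α)
    (hcont : ContinuousOn x (Set.Icc 0 T))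
    (H : ∀ m j k : ℕ, j ≤ k → k ≤ 2 ^ m →
      |x (k * T / 2 ^ m) - x (j * T / 2 ^ m)| ≤ K * (((k:ℝ) - j) * T / 2 ^ m) ^ α) :
    ∀ s t : ℝ, s ∈ Set.Icc 0 T → t ∈ Set.Icc 0 T → s ≤ t →
      |x t - x s| ≤ K * (t - s) ^ α := by
  intro s t hs ht hst
  rcases eq_or_lt_of_le hst with h | hslt
  · subst h; simp [Real.zero_rpow hα.ne', abs_nonneg]
  obtain ⟨hs0, hsT⟩ := hs
  obtain ⟨ht0, htT⟩ := ht
  set jm : ℕ → ℕ := fun m => ⌈s * 2 ^ m / T⌉₊ with hjm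
  set km : ℕ → ℕ := fun m => ⌊t * 2 ^ m / T⌋₊ with hkm
  set sm : ℕ → ℝ := fun m => (jm m : ℝ) * T / 2 ^ m with hsm
  set tm : ℕ → ℝ := fun m => (km m : ℝ) * T / 2 ^ m with htm
  have hpow : ∀ m : ℕ, (0:ℝ) < 2 ^ m := fun m => by positivity
  have hsle : ∀ m, s ≤ sm m := by
    intro m
    have h1 : s * 2 ^ m / T ≤ (jm m : ℝ) := Nat.le_ceil _
    rw [hsm]
    rw [le_div_iff₀ (hpow m)]
    calc s * 2 ^ m = (s * 2 ^ m / T) * T := by field_simp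
      _ ≤ (jm m : ℝ) * T := by
          exact mul_le_mul_of_nonneg_right h1 hT.le
  have hsub : ∀ m, sm m ≤ s + T / 2 ^ m := by
    intro m
    have h1 : (jm m : ℝ) < s * 2 ^ m / T + 1 :=
      Nat.ceil_lt_add_one (by positivity)
    rw [hsm]
    rw [div_le_iff₀ (hpow m)]
    have h5 := mul_lt_mul_of_pos_right h1 hT
    have h6 : (s * 2 ^ m / T + 1) * T = s * 2 ^ m + T := by field_simp
    have h7 : (s + T / 2 ^ m) * 2 ^ m = s * 2 ^ m + T := by field_simp
    linarith
  have htle : ∀ m, tm m ≤ t := by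
    intro m
    have h1 : (km m : ℝ) ≤ t * 2 ^ m / T := Nat.floor_le (by positivity)
    rw [htm, div_le_iff₀ (hpow m)]
    calc (km m : ℝ) * T ≤ (t * 2 ^ m / T) * T := mul_le_mul_of_nonneg_right h1 hT.le
      _ = t * 2 ^ m := by field_simp
  have htsub : ∀ m, t - T / 2 ^ m ≤ tm m := by
    intro m
    have h1 : t * 2 ^ m / T < (km m : ℝ) + 1 := Nat.lt_floor_add_one _
    rw [htm, le_div_iff₀ (hpow m)]
    have h2 : t * 2 ^ m < ((km m : ℝ) + 1) * T := by
      have := mul_lt_mul_of_pos_right h1 hT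
      calc t * 2 ^ m = (t * 2 ^ m / T) * T := by field_simp
        _ < ((km m : ℝ) + 1) * T := this
    have e : (t - T / 2 ^ m) * 2 ^ m = t * 2 ^ m - T := by field_simp
    linarith
  have hk2m : ∀ m, km m ≤ 2 ^ m := by
    intro m
    have h1 : t * 2 ^ m / T ≤ ((2 ^ m : ℕ) : ℝ) := by
      push_cast
      rw [div_le_iff₀ hT]
      have := hpow m
      nlinarith
    calc km m ≤ ⌊((2 ^ m : ℕ) : ℝ)⌋₊ := Nat.floor_le_floor h1
      _ = 2 ^ m := Nat.floor_natCast _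
  have hTd : Tendsto (fun m : ℕ => T / 2 ^ m) atTop (nhds 0) := by
    have h1 : Tendsto (fun m : ℕ => ((2:ℝ) ^ m)⁻¹) atTop (nhds 0) := by
      apply tendsto_inv_atTop_zero.comp
      exact tendsto_pow_atTop_atTop_of_one_lt (by norm_num)
    have := h1.const_mul T
    simpa [div_eq_mul_inv, mul_zero] using this
  have hjmkm : ∀ᶠ m in atTop, jm m ≤ km m := by
    have h2 : ∀ᶠ m in atTop, T / 2 ^ m < (t - s) / 2 := by
      apply hTd.eventually_lt_const
      linarith
    filter_upwards [h2] with m hm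
    have h3 : sm m < tm m := by
      have := hsub m; have := htsub m; have := hsle m; have := htle m
      linarith
    have h4 : (jm m : ℝ) < km m := by
      rw [hsm, htm] at h3
      have := hpow m
      by_contra hcon
      push_neg at hcon
      have : (km m : ℝ) * T / 2 ^ m ≤ (jm m : ℝ) * T / 2 ^ m := by
        gcongr
      linarith
    exact_mod_cast h4.le
  have hmemIcc : ∀ᶠ m in atTop, sm m ∈ Set.Icc (0:ℝ) T ∧ tm m ∈ Set.Icc (0:ℝ) T := by
    filter_upwards [hjmkm] with m hm
    have h1 : sm m ≤ tm m := by
      have hc : (jm m : ℝ) ≤ km m := by exact_mod_cast hm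
      show (jm m : ℝ) * T / 2 ^ m ≤ (km m : ℝ) * T / 2 ^ m
      gcongr
    have h2 := hsle m; have h3 := htle m
    constructor
    · exact ⟨by linarith, by linarith⟩
    · constructor
      · positivity
      · linarith
  have hsmt : Tendsto sm atTop (nhds s) := by
    have hupper : Tendsto (fun m : ℕ => s + T / 2 ^ m) atTop (nhds s) := by
      simpa using (tendsto_const_nhds (x := s) (f := atTop (α := ℕ))).add hTd
    exact tendsto_of_tendsto_of_tendsto_of_le_of_le tendsto_const_nhds hupper hsle hsub
  have htmt : Tendsto tm atTop (nhds t) := by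
    have hlower : Tendsto (fun m : ℕ => t - T / 2 ^ m) atTop (nhds t) := by
      simpa using (tendsto_const_nhds (x := t) (f := atTop (α := ℕ))).sub hTd
    exact tendsto_of_tendsto_of_tendsto_of_le_of_le hlower tendsto_const_nhds htsub htle
  have hxs : Tendsto (fun m => x (sm m)) atTop (nhds (x s)) := by
    apply (hcont s ⟨hs0, hsT⟩).tendsto.comp
    rw [tendsto_nhdsWithin_iff]
    exact ⟨hsmt, hmemIcc.mono fun m hm => hm.1⟩
  have hxt : Tendsto (fun m => x (tm m)) atTop (nhds (x t)) := by
    apply (hcont t ⟨ht0, htT⟩).tendsto.comp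
    rw [tendsto_nhdsWithin_iff]
    exact ⟨htmt, hmemIcc.mono fun m hm => hm.2⟩
  have habs : Tendsto (fun m => |x (tm m) - x (sm m)|) atTop (nhds (|x t - x s|)) :=
    (hxt.sub hxs).abs
  apply le_of_tendsto habs
  filter_upwards [hjmkm] with m hm
  have h1 := H m (jm m) (km m) hm (hk2m m)
  have h2 : ((km m : ℝ) - jm m) * T / 2 ^ m ≤ t - s := by
    have e1 : ((km m : ℝ) - jm m) * T / 2 ^ m = tm m - sm m := by
      rw [htm, hsm]; ring
    rw [e1]
    have := hsle m; have := htle m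
    linarith
  have h3 : K * (((km m : ℝ) - jm m) * T / 2 ^ m) ^ α ≤ K * (t - s) ^ α := by
    apply mul_le_mul_of_nonneg_left ?_ hK
    apply Real.rpow_le_rpow ?_ h2 hα.le
    have hge : (jm m : ℝ) ≤ km m := by exact_mod_cast hm
    exact div_nonneg (mul_nonneg (by linarith) hT.le) (hpow m).le
  calc |x (tm m) - x (sm m)| = |x ((km m) * T / 2 ^ m) - x ((jm m) * T / 2 ^ m)| := by
        rw [htm, hsm]
    _ ≤ K * (((km m : ℝ) - jm m) * T / 2 ^ m) ^ α := h1
    _ ≤ K * (t - s) ^ α := h3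

noncomputable def gaussMoment (q : ℕ) : ℝ≥0∞ :=
  ∫⁻ y, ENNReal.ofReal (y ^ (2 * q)) ∂(gaussianReal 0 1)

lemma gaussMoment_lt_top (q : ℕ) : gaussMoment q < ⊤ := by
  have hf : Measurable fun y : ℝ => ENNReal.ofReal (y ^ (2 * q)) :=
    (measurable_id.pow_const _).ennreal_ofReal
  rw [gaussMoment, gaussianReal_of_var_ne_zero 0 one_ne_zero,
    lintegral_withDensity_eq_lintegral_mul _ (measurable_gaussianPDF _ _) hf]
  have hint : Integrable (fun y : ℝ => gaussianPDFReal 0 1 y * y ^ (2 * q)) := by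
    have h1 : Integrable (fun y : ℝ => y ^ ((2 * q : ℕ) : ℝ) * Real.exp (-(1/2) * y ^ 2)) :=
      integrable_rpow_mul_exp_neg_mul_sq (by norm_num)
        (lt_of_lt_of_le (by norm_num : (-1:ℝ) < 0) (by positivity))
    have h2 : Integrable (fun y : ℝ => y ^ (2 * q) * Real.exp (-(1/2) * y ^ 2)) := by
      simpa only [Real.rpow_natCast] using h1
    have h3 := h2.const_mul (√(2 * Real.pi * (1:ℝ≥0)))⁻¹
    apply h3.congr
    filter_upwards with y
    rw [gaussianPDFReal]
    push_cast
    ring_nf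
  have hbound : (∫⁻ y, (gaussianPDF 0 1 * fun y => ENNReal.ofReal (y ^ (2*q))) y)
      ≤ ∫⁻ y, ‖gaussianPDFReal 0 1 y * y ^ (2 * q)‖ₑ := by
    apply lintegral_mono
    intro y
    simp only [Pi.mul_apply, gaussianPDF]
    rw [← ENNReal.ofReal_mul (gaussianPDFReal_nonneg 0 1 y), Real.enorm_eq_ofReal_abs]
    exact ENNReal.ofReal_le_ofReal (le_abs_self _)
  exact lt_of_le_of_lt hbound hint.hasFiniteIntegral

lemma gauss_tail {Ω : Type*} [MeasureSpace Ω] [IsProbabilityMeasure (ℙ : Measure Ω)]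
    (X : Ω → ℝ) (hX : Measurable X) {u : ℝ} (hu : 0 < u)
    (hlaw : Measure.map X (ℙ : Measure Ω) = gaussianReal 0 u.toNNReal)
    {lam : ℝ} (hlam : 0 < lam) (q : ℕ) :
    (ℙ : Measure Ω) {ω | lam < |X ω|} ≤
      ENNReal.ofReal ((gaussMoment q).toReal * u ^ q / lam ^ (2 * q)) := by
  have hset : MeasurableSet {x : ℝ | lam < |x|} :=
    measurableSet_lt measurable_const measurable_abs
  have h1 : (ℙ : Measure Ω) {ω | lam < |X ω|} = gaussianReal 0 u.toNNReal {x | lam < |x|} := by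
    rw [← hlaw, Measure.map_apply hX hset]; rfl
  have hmap : gaussianReal 0 u.toNNReal
      = Measure.map (fun y => Real.sqrt u * y) (gaussianReal 0 1) := by
    rw [show (fun y => Real.sqrt u * y) = ((Real.sqrt u) * ·) by rfl,
      gaussianReal_map_const_mul]
    congr 1
    · simp
    · ext
      simp [Real.sq_sqrt hu.le, Real.toNNReal, max_eq_left hu.le]
  have h2 : gaussianReal 0 u.toNNReal {x | lam < |x|}
      = gaussianReal 0 1 {y : ℝ | lam / Real.sqrt u < |y|} := by
    rw [hmap, Measure.map_apply (measurable_const_mul _) hset]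
    congr 1
    ext y
    simp only [Set.mem_preimage, Set.mem_setOf_eq, abs_mul,
      abs_of_nonneg (Real.sqrt_nonneg u)]
    rw [div_lt_iff₀ (Real.sqrt_pos.mpr hu)]
    constructor <;> intro h <;> linarith [mul_comm (Real.sqrt u) |y|]
  have hsq : 0 < lam / Real.sqrt u := div_pos hlam (Real.sqrt_pos.mpr hu)
  set ε : ℝ≥0∞ := ENNReal.ofReal ((lam ^ 2 / u) ^ q) with hε
  have hεpos : (0:ℝ) < (lam ^ 2 / u) ^ q := by positivity
  have hsub : {y : ℝ | lam / Real.sqrt u < |y|}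
      ⊆ {y : ℝ | ε ≤ ENNReal.ofReal (y ^ (2 * q))} := by
    intro y hy
    simp only [Set.mem_setOf_eq] at hy ⊢
    rw [hε]
    apply ENNReal.ofReal_le_ofReal
    have hy2 : (lam / Real.sqrt u) ^ 2 ≤ y ^ 2 := by
      rw [← sq_abs y]
      exact pow_le_pow_left₀ hsq.le hy.le 2
    have : (lam / Real.sqrt u) ^ 2 = lam ^ 2 / u := by
      rw [div_pow, Real.sq_sqrt hu.le]
    rw [← this, pow_mul]
    exact pow_le_pow_left₀ (by positivity) hy2 q
  have hεne : ε ≠ 0 := by rw [hε]; exact (ENNReal.ofReal_pos.mpr hεpos).ne'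
  have hεtop : ε ≠ ⊤ := by rw [hε]; exact ENNReal.ofReal_ne_top
  have hmarkov : gaussianReal 0 1 {y : ℝ | lam / Real.sqrt u < |y|}
      ≤ gaussMoment q / ε := by
    refine le_trans (measure_mono hsub) ?_
    exact meas_ge_le_lintegral_div ((measurable_id.pow_const _).ennreal_ofReal).aemeasurable
      hεne hεtop
  rw [h1, h2]
  refine hmarkov.trans ?_
  have hne : gaussMoment q ≠ ⊤ := (gaussMoment_lt_top q).ne
  have hM0 : (0:ℝ) ≤ (gaussMoment q).toReal := ENNReal.toReal_nonneg
  conv_lhs => rw [← ENNReal.ofReal_toReal hne]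
  rw [hε, ← ENNReal.ofReal_div_of_pos hεpos]
  apply ENNReal.ofReal_le_ofReal
  rw [div_pow, pow_mul, div_div_eq_mul_div]

set_option maxHeartbeats 1000000 in
/-- Almost surely, the sample paths of a standard real Brownian motion on `[0,T]`
(`B_0 = 0`, a.s. continuous paths, independent increments, `B_t − B_s` Gaussian centred
with variance `t − s`) have finite `p`-variation for every `p > 2`. -/
theorem statement19 (T : ℝ) (hT : 0 < T)
    {Ω : Type*} [MeasureSpace Ω] [IsProbabilityMeasure (ℙ : Measure Ω)]
    (B : ℝ → Ω → ℝ)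
    (hmeas : ∀ t : ℝ, Measurable (B t))
    (h0 : ∀ᵐ ω ∂(ℙ : Measure Ω), B 0 ω = 0)
    (hcont : ∀ᵐ ω ∂(ℙ : Measure Ω), ContinuousOn (fun t => B t ω) (Set.Icc 0 T))
    (hindep : ∀ (n : ℕ) (t : ℕ → ℝ),
      (∀ i ≤ n, t i ∈ Set.Icc (0 : ℝ) T) → (∀ i < n, t i ≤ t (i + 1)) →
      iIndepFun
        (fun i : Fin n => fun ω => B (t ((i : ℕ) + 1)) ω - B (t (i : ℕ)) ω)
        (ℙ : Measure Ω))
    (hgauss : ∀ s t : ℝ, 0 ≤ s → s ≤ t → t ≤ T →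
      Measure.map (fun ω => B t ω - B s ω) (ℙ : Measure Ω) =
        gaussianReal 0 (Real.toNNReal (t - s))) :
    ∀ p : ℝ, 2 < p →
      ∀ᵐ ω ∂(ℙ : Measure Ω), HasFinitePVariation p 0 T (fun t => B t ω) := by
  intro p hp
  have hp0 : (0:ℝ) < p := by linarith
  set α : ℝ := (1/p + 1/2)/2 with hαdef
  have h1p : 1/p < 1/2 := by
    rw [div_lt_div_iff₀ hp0 two_pos]; linarith
  have hα1 : 1/p < α := by rw [hαdef]; linarith
  have hα2 : α < 1/2 := by rw [hαdef]; linarith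
  have hα0 : 0 < α := lt_trans (by positivity) hα1
  set r : ℝ := (2:ℝ) ^ (-α) with hrdef
  have hr0 : 0 < r := Real.rpow_pos_of_pos two_pos _
  have hr1 : r < 1 := Real.rpow_lt_one_of_one_lt_of_neg one_lt_two (by linarith)
  have h2α : 0 < 1 - 2*α := by linarith
  set q : ℕ := ⌊1/(1-2*α)⌋₊ + 1 with hqdef
  have hqgt : 1/(1-2*α) < (q:ℝ) := by
    rw [hqdef]; push_cast; exact Nat.lt_floor_add_one _
  have hq1 : 1 < (q:ℝ)*(1-2*α) := by
    rw [div_lt_iff₀ h2α] at hqgt; linarith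
  set ρ : ℝ := (2:ℝ) ^ (1 - (q:ℝ) + 2*α*q) with hρdef
  have hρ0 : 0 < ρ := Real.rpow_pos_of_pos two_pos _
  have hρ1 : ρ < 1 := by
    apply Real.rpow_lt_one_of_one_lt_of_neg one_lt_two
    nlinarith
  -- the dyadic increments
  set Δ : ℕ → ℕ → Ω → ℝ :=
    fun n k ω => B (((k:ℝ)+1)*T/2^n) ω - B ((k:ℝ)*T/2^n) ω with hΔdef
  set A : ℕ → Set Ω :=
    fun n => ⋃ k ∈ Finset.range (2^n), {ω | r^n < |Δ n k ω|} with hAdef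
  -- tail bound for each increment
  have htail : ∀ n k : ℕ, k + 1 ≤ 2^n →
      (ℙ : Measure Ω) {ω | r^n < |Δ n k ω|} ≤
        ENNReal.ofReal ((gaussMoment q).toReal * (T/2^n)^q / (r^n)^(2*q)) := by
    intro n k hk
    have hpow : (0:ℝ) < 2^n := by positivity
    have hs0 : (0:ℝ) ≤ (k:ℝ)*T/2^n := by positivity
    have hstep : (k:ℝ)*T/2^n ≤ ((k:ℝ)+1)*T/2^n := by
      have hnum : (k:ℝ)*T ≤ ((k:ℝ)+1)*T := by nlinarith
      exact (div_le_div_iff_of_pos_right hpow).mpr hnum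
    have hk2 : ((k:ℝ)+1) ≤ 2^n := by exact_mod_cast hk
    have htT : ((k:ℝ)+1)*T/2^n ≤ T := by
      rw [div_le_iff₀ hpow]; nlinarith
    have hlaw := hgauss ((k:ℝ)*T/2^n) (((k:ℝ)+1)*T/2^n) hs0 hstep htT
    have hdiff : ((k:ℝ)+1)*T/2^n - (k:ℝ)*T/2^n = T/2^n := by ring
    rw [hdiff] at hlaw
    exact gauss_tail (Δ n k) ((hmeas _).sub (hmeas _)) (by positivity) hlaw
      (pow_pos hr0 n) q
  -- the geometric computation
  have hcomp : ∀ n : ℕ, (2:ℝ)^n * ((gaussMoment q).toReal * (T/2^n)^q / (r^n)^(2*q))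
      = ((gaussMoment q).toReal * T^q) * ρ^n := by
    intro n
    have h2n : ((2:ℝ)^n) = (2:ℝ) ^ ((n:ℕ):ℝ) := (Real.rpow_natCast 2 n).symm
    have hrn : r^n = (2:ℝ) ^ (-α*(n:ℝ)) := by
      rw [hrdef, ← Real.rpow_natCast ((2:ℝ)^(-α)) n, ← Real.rpow_mul two_pos.le]
    have hrn2 : (r^n)^(2*q) = (2:ℝ) ^ (-α*(n:ℝ)*((2*q:ℕ):ℝ)) := by
      rw [hrn, ← Real.rpow_natCast ((2:ℝ)^(-α*(n:ℝ))) (2*q), ← Real.rpow_mul two_pos.le]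
    have hTn : (T/2^n)^q = T^q / (2:ℝ) ^ (((n*q:ℕ)):ℝ) := by
      rw [div_pow, ← pow_mul, Real.rpow_natCast]
    have hρn : ρ^n = (2:ℝ) ^ ((1 - (q:ℝ) + 2*α*q)*(n:ℝ)) := by
      rw [hρdef, ← Real.rpow_natCast ((2:ℝ)^(1 - (q:ℝ) + 2*α*q)) n,
        ← Real.rpow_mul two_pos.le]
    rw [hrn2, hTn, hρn, h2n]
    have e1 : (2:ℝ)^((n:ℕ):ℝ) * ((gaussMoment q).toReal * (T^q / (2:ℝ)^(((n*q:ℕ)):ℝ))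
          / (2:ℝ)^(-α*(n:ℝ)*((2*q:ℕ):ℝ)))
        = ((gaussMoment q).toReal * T^q) *
          ((2:ℝ)^((n:ℕ):ℝ) / (2:ℝ)^(((n*q:ℕ)):ℝ) / (2:ℝ)^(-α*(n:ℝ)*((2*q:ℕ):ℝ))) := by
      ring
    rw [e1, ← Real.rpow_sub two_pos, ← Real.rpow_sub two_pos]
    congr 1
    push_cast
    ring
  -- bound on ℙ (A n)
  have hAn : ∀ n, (ℙ : Measure Ω) (A n) ≤
      ENNReal.ofReal ((gaussMoment q).toReal * T^q) * (ENNReal.ofReal ρ)^n := by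
    intro n
    have hM0 : (0:ℝ) ≤ (gaussMoment q).toReal := ENNReal.toReal_nonneg
    calc (ℙ : Measure Ω) (A n)
        ≤ ∑ k ∈ Finset.range (2^n), (ℙ : Measure Ω) {ω | r^n < |Δ n k ω|} :=
          measure_biUnion_finset_le _ _
      _ ≤ ∑ k ∈ Finset.range (2^n),
            ENNReal.ofReal ((gaussMoment q).toReal * (T/2^n)^q / (r^n)^(2*q)) := by
          apply Finset.sum_le_sum
          intro k hk
          exact htail n k (Finset.mem_range.mp hk)
      _ = (2^n : ℕ) * ENNReal.ofReal ((gaussMoment q).toReal * (T/2^n)^q / (r^n)^(2*q)) := by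
          rw [Finset.sum_const, Finset.card_range, nsmul_eq_mul]
      _ = ENNReal.ofReal ((2:ℝ)^n * ((gaussMoment q).toReal * (T/2^n)^q / (r^n)^(2*q))) := by
          rw [ENNReal.ofReal_mul (by positivity)]
          congr 1
          rw [← ENNReal.ofReal_natCast]
          congr 1
          push_cast
          ring
      _ = ENNReal.ofReal (((gaussMoment q).toReal * T^q) * ρ^n) := by rw [hcomp n]
      _ = ENNReal.ofReal ((gaussMoment q).toReal * T^q) * (ENNReal.ofReal ρ)^n := by
          rw [ENNReal.ofReal_mul (by positivity), ENNReal.ofReal_pow hρ0.le]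
  -- Borel-Cantelli
  have hsum : (∑' n, (ℙ : Measure Ω) (A n)) ≠ ⊤ := by
    have hx1 : ENNReal.ofReal ρ < 1 := by
      rw [← ENNReal.ofReal_one]
      exact ENNReal.ofReal_lt_ofReal_iff_of_nonneg hρ0.le |>.mpr hρ1
    have hle : (∑' n, (ℙ : Measure Ω) (A n)) ≤
        ENNReal.ofReal ((gaussMoment q).toReal * T^q) * (1 - ENNReal.ofReal ρ)⁻¹ := by
      calc (∑' n, (ℙ : Measure Ω) (A n))
          ≤ ∑' n, ENNReal.ofReal ((gaussMoment q).toReal * T^q) * (ENNReal.ofReal ρ)^n :=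
            ENNReal.tsum_le_tsum hAn
        _ = ENNReal.ofReal ((gaussMoment q).toReal * T^q) * ∑' n, (ENNReal.ofReal ρ)^n :=
            ENNReal.tsum_mul_left
        _ = _ := by rw [ENNReal.tsum_geometric]
    apply ne_top_of_le_ne_top ?_ hle
    apply ENNReal.mul_ne_top ENNReal.ofReal_ne_top
    rw [Ne, ENNReal.inv_eq_top]
    intro hzero
    have h1 : (1:ℝ≥0∞) ≤ ENNReal.ofReal ρ := by
      rwa [tsub_eq_zero_iff_le] at hzero
    exact absurd (lt_of_lt_of_le hx1 h1) (lt_irrefl _)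
  have hBC := MeasureTheory.ae_finite_setOf_mem (μ := (ℙ : Measure Ω)) (s := A) hsum
  -- conclusion
  filter_upwards [hcont, hBC] with ω hcω hfin
  obtain ⟨N, hN⟩ := hfin.bddAbove
  have hsmall : ∀ n k : ℕ, N + 1 ≤ n → k + 1 ≤ 2^n → |Δ n k ω| ≤ r^n := by
    intro n k hn hk
    have hnot : ω ∉ A n := by
      intro hmem
      have := hN hmem
      omega
    rw [hAdef] at hnot
    simp only [Set.mem_iUnion, not_exists, Set.mem_setOf_eq] at hnot
    exact not_lt.mp (hnot k (Finset.mem_range.mpr (by omega)))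
  set Cω : ℝ := 1 + ∑ n ∈ Finset.range (N+1), ∑ k ∈ Finset.range (2^n),
    |Δ n k ω| / r^n with hCdef
  have hsum_nonneg : (0:ℝ) ≤ ∑ n ∈ Finset.range (N+1), ∑ k ∈ Finset.range (2^n),
      |Δ n k ω| / r^n :=
    Finset.sum_nonneg fun n _ => Finset.sum_nonneg fun k _ => by positivity
  have hC1 : (1:ℝ) ≤ Cω := by rw [hCdef]; linarith
  have hH : ∀ n k : ℕ, k + 1 ≤ 2^n →
      |(fun t => B t ω) (((k:ℝ)+1)*T/2^n) - (fun t => B t ω) ((k:ℝ)*T/2^n)|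
        ≤ Cω * ((2:ℝ)^(-α))^n := by
    intro n k hk
    rw [← hrdef]
    have hDk : |(fun t => B t ω) (((k:ℝ)+1)*T/2^n) - (fun t => B t ω) ((k:ℝ)*T/2^n)|
        = |Δ n k ω| := rfl
    rw [hDk]
    by_cases hn : N + 1 ≤ n
    · have h1 := hsmall n k hn hk
      have h2 : r^n ≤ Cω * r^n := by
        nlinarith [pow_pos hr0 n]
      linarith
    · push_neg at hn
      have h1 : |Δ n k ω| / r^n ≤ ∑ k' ∈ Finset.range (2^n), |Δ n k' ω| / r^n :=
        Finset.single_le_sum (f := fun k' => |Δ n k' ω| / r^n)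
          (fun i _ => by positivity) (Finset.mem_range.mpr (by omega))
      have h2 : ∑ k' ∈ Finset.range (2^n), |Δ n k' ω| / r^n
          ≤ ∑ n' ∈ Finset.range (N+1), ∑ k' ∈ Finset.range (2^n'), |Δ n' k' ω| / r^n' :=
        Finset.single_le_sum
          (f := fun n' => ∑ k' ∈ Finset.range (2^n'), |Δ n' k' ω| / r^n')
          (fun i _ => Finset.sum_nonneg fun k' _ => by positivity)
          (Finset.mem_range.mpr (by omega))
      have h3 : |Δ n k ω| / r^n ≤ Cω - 1 := by rw [hCdef]; linarith
      have h4 : |Δ n k ω| ≤ (Cω - 1) * r^n := by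
        rw [div_le_iff₀ (pow_pos hr0 n)] at h3
        linarith
      nlinarith [pow_pos hr0 n]
  have hdyadic := chain_holder (fun t => B t ω) T Cω α hT (by linarith) hα0 hH
  set K : ℝ := 2 * Cω / (1 - (2:ℝ)^(-α)) * (2/T)^α with hKdef
  have hK0 : (0:ℝ) ≤ K := by
    rw [hKdef]
    apply mul_nonneg
    · apply div_nonneg (by linarith)
      rw [← hrdef]; linarith
    · exact Real.rpow_nonneg (by positivity) _
  have hhol := holder_extend (fun t => B t ω) T K α hT hK0 hα0 hcω hdyadic
  refine holder_pVar (α := α) hT hK0 (by linarith : (0:ℝ) ≤ p) ?_ _ ?_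
  · -- 1 ≤ α * p
    have : (1/p) * p = 1 := by field_simp
    nlinarith
  · intro s t hs ht hst
    exact hhol s t hs ht hst
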